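/- Let −1 < α < 0, let f* : ℝ → ℂ be continuous, 2π-periodic with |f*(t)| ≤ 1 for all t, and let f = P_α[f*]. Then for every z ∈ 𝔻, |f(z) − ((1−|z|²)^{α+1}/(1+|z|²))·f(0)| ≤ (4/π)·(1−|z|)^α·arctan|z| + ((1−|z|)^α − 1). -/

import Mathlib

/-!
Write `w = z e^{-it}`, `r = |w|` and `ζ = 1 - w̄`. Since `(1 - w) ζ = |1 - w|²`, the kernel factors
as `P_α(w) = (1 - r²)^α ζ^{-α} P(w)` with `P(w) = (1 - r²)/|1 - w|²` the harmonic Poisson kernel.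
Hence `P_α(w) - (1 - r²)^{α+1}/(1 + r²)` splits into `(1 - r²)^α ζ^{-α} (P(w) - (1 - r²)/(1 + r²))`,
of modulus at most `(1 - r)^α |P(w) - (1 - r²)/(1 + r²)|`, and a term controlled by
`|ζ^{-α} - 1| ≤ 1 - (1 - r)^{-α}`, valid because `0 ≤ -α ≤ 1`.
After integrating over the circle, what remains is `∫₀^{2π} |P(r e^{it}) - (1 - r²)/(1 + r²)| dt
= 8 arctan r`: the integrand has the sign of `cos t`, and `P` has the antiderivative
`2 arctan ((1 + r)/(1 - r) · tan (t/2))` on `[-π/2, π/2]`.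
-/

open Complex MeasureTheory Real Set

noncomputable section

/-- Wirtinger derivative `∂f = (f_x - i f_y)/2` of a function `f : ℂ → ℂ`,
viewed as a real-differentiable map. -/
def wdz (f : ℂ → ℂ) (z : ℂ) : ℂ :=
  (fderiv ℝ f z 1 - Complex.I * fderiv ℝ f z Complex.I) / 2

/-- Wirtinger derivative `∂̄f = (f_x + i f_y)/2`. -/
def wdzbar (f : ℂ → ℂ) (z : ℂ) : ℂ :=
  (fderiv ℝ f z 1 + Complex.I * fderiv ℝ f z Complex.I) / 2

/-- The `α`-harmonic Poisson kernel
`P_α(z) = (1-|z|²)^{α+1} / ((1-z)(1-z̄)^{α+1})` (principal powers). -/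
def poissonKernelAlpha (α : ℝ) (z : ℂ) : ℂ :=
  (((1 - ‖z‖ ^ 2) ^ (α + 1) : ℝ) : ℂ) /
    ((1 - z) * (1 - (starRingEnd ℂ) z) ^ ((α : ℂ) + 1))

/-- The `α`-harmonic extension `P_α[F](z) = (1/2π) ∫₀^{2π} P_α(z e^{-it}) F(t) dt`. -/
def poissonExt (α : ℝ) (F : ℝ → ℂ) (z : ℂ) : ℂ :=
  (1 / (2 * Real.pi) : ℂ) *
    ∫ t in (0:ℝ)..(2 * Real.pi), poissonKernelAlpha α (z * Complex.exp (-Complex.I * t)) * F t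

/-- The angular derivative `∂_θ f(z) = i (z ∂f(z) - z̄ ∂̄f(z))`. -/
def angularDeriv (f : ℂ → ℂ) (z : ℂ) : ℂ :=
  Complex.I * (z * wdz f z - (starRingEnd ℂ) z * wdzbar f z)

/-- The integral mean `M_p(r,g) = ((1/2π) ∫₀^{2π} |g(r e^{iθ})|^p dθ)^{1/p}`. -/
def Mp (p : ℝ) (r : ℝ) (g : ℂ → ℂ) : ℝ :=
  ((1 / (2 * Real.pi)) *
      ∫ θ in (0:ℝ)..(2 * Real.pi),
        ‖(g ((r : ℂ) * Complex.exp (Complex.I * θ)))‖ ^ p) ^ (1 / p)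

/-- The boundary `L^p` norm `‖G‖_{L^p} = ((1/2π) ∫₀^{2π} |G(t)|^p dt)^{1/p}`. -/
def lpNormBdry (p : ℝ) (G : ℝ → ℂ) : ℝ :=
  ((1 / (2 * Real.pi)) * ∫ t in (0:ℝ)..(2 * Real.pi), ‖(G t)‖ ^ p) ^ (1 / p)

/-- The constant `c_α = Γ(α+1)/Γ(α/2+1)²`. -/
def cAlpha (α : ℝ) : ℝ := Real.Gamma (α + 1) / (Real.Gamma (α / 2 + 1)) ^ 2

/-- `I_α(r) = (1/2π) ∫₀^{2π} (1-r²)^α / |1 - r e^{it}|^{α+1} dt`. -/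
def Ialpha (α r : ℝ) : ℝ :=
  (1 / (2 * Real.pi)) *
    ∫ t in (0:ℝ)..(2 * Real.pi),
      (1 - r ^ 2) ^ α / (‖(1 - (r : ℂ) * Complex.exp (Complex.I * t))‖) ^ (α + 1)

/-- `g_α(z) = ((1-|z|²)/(1-z̄))^α` (principal complex power). -/
def gAlpha (α : ℝ) (z : ℂ) : ℂ :=
  ((((1 - ‖z‖ ^ 2 : ℝ)) : ℂ) / (1 - (starRingEnd ℂ) z)) ^ (α : ℂ)

end

/-- The right side is the sum of the moduli of the binomial series of the left side at `|u| = r`. -/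
theorem norm_one_add_cpow_sub_one_le {u : ℂ} {β r : ℝ} (hβ0 : 0 ≤ β) (hβ1 : β ≤ 1)
    (hu : ‖u‖ ≤ r) (hr : r < 1) :
    ‖(1 + u) ^ (β : ℂ) - 1‖ ≤ 1 - (1 - r) ^ β := by
  have hpos : ∀ s ∈ Icc (0 : ℝ) 1, 0 < 1 - s * r := fun s hs => by
    nlinarith [norm_nonneg u, hs.1, hs.2]
  have hnorm : ∀ s ∈ Icc (0 : ℝ) 1, 1 - s * r ≤ ‖1 + (s : ℂ) * u‖ := fun s hs => by
    have h := norm_sub_norm_le (1 : ℂ) (-((s : ℂ) * u))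
    rw [norm_neg, norm_mul, Complex.norm_real, Real.norm_of_nonneg hs.1] at h
    simp only [sub_neg_eq_add, norm_one] at h
    nlinarith [hs.1]
  have hslit : ∀ s ∈ Icc (0 : ℝ) 1, 1 + (s : ℂ) * u ∈ slitPlane := fun s hs => by
    refine Or.inl ?_
    have := (abs_le.1 ((Complex.abs_re_le_norm u).trans hu)).1
    simp only [add_re, one_re, re_ofReal_mul]
    nlinarith [hpos s hs, hs.1]
  have hf : ∀ s ∈ Icc (0 : ℝ) 1, HasDerivAt (fun s : ℝ => (1 + (s : ℂ) * u) ^ (β : ℂ) - 1)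
      (β * (1 + (s : ℂ) * u) ^ ((β : ℂ) - 1) * u) s := fun s hs => by
    have hin : HasDerivAt (fun s : ℝ => 1 + (s : ℂ) * u) u s := by
      simpa using ((hasDerivAt_id s).ofReal_comp.mul_const u).const_add 1
    exact (((hasStrictDerivAt_cpow_const (hslit s hs)).hasDerivAt.comp s hin).sub_const 1)
  have hB : ∀ s ∈ Icc (0 : ℝ) 1, HasDerivAt (fun s : ℝ => 1 - (1 - s * r) ^ β)
      (β * (1 - s * r) ^ (β - 1) * r) s := fun s hs => by
    have hin : HasDerivAt (fun s : ℝ => 1 - s * r) (-r) s := by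
      simpa using ((hasDerivAt_id s).mul_const r).const_sub 1
    exact ((hin.rpow_const (Or.inl (hpos s hs).ne')).const_sub 1).congr_deriv (by ring)
  have key := image_norm_le_of_norm_deriv_right_le_deriv_boundary' (a := 0) (b := 1)
    (fun s hs => (hf s hs).continuousAt.continuousWithinAt)
    (fun s hs => (hf s (Ico_subset_Icc_self hs)).hasDerivWithinAt) (by simp)
    (fun s hs => (hB s hs).continuousAt.continuousWithinAt)
    (fun s hs => (hB s (Ico_subset_Icc_self hs)).hasDerivWithinAt) ?_ (right_mem_Icc.2 zero_le_one)
  · simpa using key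
  intro s hs
  have hs' := Ico_subset_Icc_self hs
  rw [norm_mul, norm_mul, Complex.norm_real, Real.norm_of_nonneg hβ0,
    show (β : ℂ) - 1 = ((β - 1 : ℝ) : ℂ) by push_cast; ring, Complex.norm_cpow_real]
  have hpow := Real.rpow_le_rpow_of_nonpos (hpos s hs') (hnorm s hs') (by linarith : β - 1 ≤ 0)
  exact mul_le_mul (mul_le_mul_of_nonneg_left hpow hβ0) hu (norm_nonneg u)
    (mul_nonneg hβ0 (Real.rpow_nonneg (hpos s hs').le _))

/-- The harmonic Poisson kernel `(1 - |w|²)/|1 - w|²` at `w = r e^{it}`. -/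
noncomputable def diskPoissonKernel (r t : ℝ) : ℝ := (1 - r ^ 2) / (1 - 2 * r * Real.cos t + r ^ 2)

section DiskPoissonKernel

variable {r : ℝ}

theorem one_sub_two_mul_cos_add_sq_pos (hr : |r| < 1) (t : ℝ) :
    0 < 1 - 2 * r * Real.cos t + r ^ 2 := by
  have hcos : r * Real.cos t ≤ |r| := by
    calc r * Real.cos t ≤ |r * Real.cos t| := le_abs_self _
      _ = |r| * |Real.cos t| := abs_mul _ _
      _ ≤ |r| := mul_le_of_le_one_right (abs_nonneg r) (Real.abs_cos_le_one t)
  nlinarith [sq_abs r, pow_pos (sub_pos.2 hr) 2]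

theorem continuous_diskPoissonKernel (hr : |r| < 1) : Continuous (diskPoissonKernel r) :=
  continuous_const.div (by fun_prop) fun t => (one_sub_two_mul_cos_add_sq_pos hr t).ne'

theorem diskPoissonKernel_periodic : Function.Periodic (diskPoissonKernel r) (2 * π) := by
  intro t; simp [diskPoissonKernel]

theorem diskPoissonKernel_add_pi (t : ℝ) :
    diskPoissonKernel r (t + π) = diskPoissonKernel (-r) t := by
  simp [diskPoissonKernel, Real.cos_add_pi]

theorem diskPoissonKernel_sub_eq (hr : |r| < 1) (t : ℝ) :
    diskPoissonKernel r t - (1 - r ^ 2) / (1 + r ^ 2) =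
      2 * (r * Real.cos t) * (1 - r ^ 2) / ((1 + r ^ 2) * (1 - 2 * r * Real.cos t + r ^ 2)) := by
  have := (one_sub_two_mul_cos_add_sq_pos hr t).ne'
  rw [diskPoissonKernel, div_sub_div _ _ this (by positivity)]
  ring_nf

theorem hasDerivAt_two_mul_arctan_tan_half (hr : |r| < 1) {t : ℝ} (ht : Real.cos (t / 2) ≠ 0) :
    HasDerivAt (fun t => 2 * Real.arctan ((1 + r) / (1 - r) * Real.tan (t / 2)))
      (diskPoissonKernel r t) t := by
  have h1r : 1 - r ≠ 0 := by linarith [(abs_lt.1 hr).2]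
  have hhalf : HasDerivAt (fun t : ℝ => t / 2) (1 / 2) t := (hasDerivAt_id t).div_const 2
  have htan : HasDerivAt (fun t : ℝ => Real.tan (t / 2)) (1 / Real.cos (t / 2) ^ 2 * (1 / 2)) t :=
    ((Real.hasDerivAt_tan ht).comp t hhalf :)
  refine (((Real.hasDerivAt_arctan _).comp t (htan.const_mul _)).const_mul 2).congr_deriv ?_
  have hcos : Real.cos t = 2 * Real.cos (t / 2) ^ 2 - 1 := by
    rw [← Real.cos_two_mul, mul_div_cancel₀ t two_ne_zero]
  have hden := one_sub_two_mul_cos_add_sq_pos hr t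
  rw [hcos] at hden
  rw [diskPoissonKernel, hcos, Real.tan_eq_sin_div_cos]
  field_simp
  rw [Real.sin_sq]
  ring

theorem integral_diskPoissonKernel_neg_pi_div_two (hr : |r| < 1) :
    ∫ t in -(π / 2)..π / 2, diskPoissonKernel r t = 4 * Real.arctan ((1 + r) / (1 - r)) := by
  rw [intervalIntegral.integral_eq_sub_of_hasDerivAt
    (f := fun t => 2 * Real.arctan ((1 + r) / (1 - r) * Real.tan (t / 2))) (fun t ht => ?_)
    ((continuous_diskPoissonKernel hr).intervalIntegrable _ _)]
  · rw [neg_div, Real.tan_neg, show π / 2 / 2 = π / 4 by ring, Real.tan_pi_div_four,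
      mul_neg, mul_one, Real.arctan_neg]
    ring
  · rw [uIcc_of_le (by linarith [Real.pi_pos])] at ht
    refine hasDerivAt_two_mul_arctan_tan_half hr (Real.cos_pos_of_mem_Ioo ⟨?_, ?_⟩).ne' <;>
      linarith [ht.1, ht.2, Real.pi_pos]

theorem arctan_one_add_div_one_sub (hr : r < 1) :
    Real.arctan ((1 + r) / (1 - r)) = π / 4 + Real.arctan r := by
  rw [← Real.arctan_one, Real.arctan_add (by linarith), one_mul]

theorem integral_abs_diskPoissonKernel_sub (hr0 : 0 ≤ r) (hr1 : r < 1) :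
    ∫ t in (0 : ℝ)..2 * π, |diskPoissonKernel r t - (1 - r ^ 2) / (1 + r ^ 2)| =
      8 * Real.arctan r := by
  have hr : |r| < 1 := by rwa [abs_of_nonneg hr0]
  have hr' : |-r| < 1 := by rwa [abs_neg]
  set c := (1 - r ^ 2) / (1 + r ^ 2)
  set g := fun t => |diskPoissonKernel r t - c|
  have hg : Continuous g := ((continuous_diskPoissonKernel hr).sub continuous_const).abs
  have hgper : Function.Periodic g (2 * π) := fun t => by
    simp only [g, diskPoissonKernel_periodic t]
  have hhalf : ∀ t ∈ uIcc (-(π / 2)) (π / 2),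
      g t + g (t + π) = diskPoissonKernel r t - diskPoissonKernel (-r) t := fun t ht => by
    rw [uIcc_of_le (by linarith [Real.pi_pos])] at ht
    have hcos : 0 ≤ Real.cos t := Real.cos_nonneg_of_mem_Icc ht
    have hD := one_sub_two_mul_cos_add_sq_pos hr t
    have hD' := one_sub_two_mul_cos_add_sq_pos hr' t
    have h1r : 0 ≤ 1 - r ^ 2 := by nlinarith
    have hrcos := mul_nonneg hr0 hcos
    have hpos : 0 ≤ diskPoissonKernel r t - c := by
      rw [diskPoissonKernel_sub_eq hr t]
      exact div_nonneg (mul_nonneg (mul_nonneg zero_le_two hrcos) h1r)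
        (mul_pos (by positivity) hD).le
    have hneg : diskPoissonKernel (-r) t - c ≤ 0 := by
      have h := diskPoissonKernel_sub_eq hr' t
      rw [neg_sq] at h hD'
      rw [h]
      exact div_nonpos_of_nonpos_of_nonneg (by nlinarith) (mul_pos (by positivity) hD').le
    simp only [g, diskPoissonKernel_add_pi, abs_of_nonneg hpos, abs_of_nonpos hneg]
    ring
  calc ∫ t in (0 : ℝ)..2 * π, g t
      = (∫ t in -(π / 2)..π / 2, g t) + ∫ t in -(π / 2)..π / 2, g (t + π) := by
        rw [← zero_add (2 * π), hgper.intervalIntegral_add_eq 0 (-(π / 2)),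
          intervalIntegral.integral_comp_add_right, show -(π / 2) + π = π / 2 by ring,
          intervalIntegral.integral_add_adjacent_intervals (hg.intervalIntegrable _ _)
            (hg.intervalIntegrable _ _)]
        congr 1; ring
    _ = ∫ t in -(π / 2)..π / 2, (diskPoissonKernel r t - diskPoissonKernel (-r) t) := by
        rw [← intervalIntegral.integral_add (f := g) (g := fun t => g (t + π))
          (hg.intervalIntegrable _ _)
          ((hg.comp (continuous_add_const π)).intervalIntegrable _ _)]
        exact intervalIntegral.integral_congr hhalf
    _ = 8 * Real.arctan r := by
        rw [intervalIntegral.integral_sub ((continuous_diskPoissonKernel hr).intervalIntegrable _ _)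
          ((continuous_diskPoissonKernel hr').intervalIntegrable _ _),
          integral_diskPoissonKernel_neg_pi_div_two hr,
          integral_diskPoissonKernel_neg_pi_div_two hr', arctan_one_add_div_one_sub hr1,
          arctan_one_add_div_one_sub (by linarith), Real.arctan_neg]
        ring

end DiskPoissonKernel

section PoissonKernelAlpha

variable {α : ℝ} {w : ℂ}

theorem one_sub_conj_mem_slitPlane (hw : ‖w‖ < 1) : 1 - (starRingEnd ℂ) w ∈ slitPlane := by
  refine Or.inl ?_
  have := (abs_le.1 (Complex.abs_re_le_norm w)).2
  simp only [sub_re, one_re, conj_re]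
  linarith

theorem one_sub_ne_zero_of_norm_lt_one (hw : ‖w‖ < 1) : 1 - w ≠ 0 := by
  rw [sub_ne_zero]
  rintro rfl
  simp at hw

theorem poissonKernelAlpha_zero : poissonKernelAlpha α 0 = 1 := by
  simp [poissonKernelAlpha]

theorem continuousOn_poissonKernelAlpha :
    ContinuousOn (poissonKernelAlpha α) (Metric.ball 0 1) := by
  have hball : ∀ z ∈ Metric.ball (0 : ℂ) 1, ‖z‖ < 1 := fun z hz => by simpa using hz
  refine ContinuousOn.div ?_ ?_ fun z hz => ?_
  · refine Complex.continuous_ofReal.comp_continuousOn (ContinuousOn.rpow_const (by fun_prop) ?_)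
    intro z hz
    left
    nlinarith [hball z hz, norm_nonneg z]
  · exact (by fun_prop : Continuous fun z : ℂ => 1 - z).continuousOn.mul
      ((by fun_prop : Continuous fun z : ℂ => 1 - (starRingEnd ℂ) z).continuousOn.cpow_const
        fun z hz => one_sub_conj_mem_slitPlane (hball z hz))
  · exact mul_ne_zero (one_sub_ne_zero_of_norm_lt_one (hball z hz))
      (cpow_ne_zero_iff.2 (Or.inl (slitPlane_ne_zero (one_sub_conj_mem_slitPlane (hball z hz)))))

theorem poissonKernelAlpha_eq_mul (hw : ‖w‖ < 1) :
    poissonKernelAlpha α w = (((1 - ‖w‖ ^ 2) ^ α : ℝ) : ℂ) * (1 - (starRingEnd ℂ) w) ^ (-(α : ℂ)) *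
      (((1 - ‖w‖ ^ 2) / normSq (1 - w) : ℝ) : ℂ) := by
  have hζ := slitPlane_ne_zero (one_sub_conj_mem_slitPlane hw)
  have hN : (normSq (1 - w) : ℂ) ≠ 0 := by
    exact_mod_cast (normSq_pos.2 (one_sub_ne_zero_of_norm_lt_one hw)).ne'
  have h1r : 0 < 1 - ‖w‖ ^ 2 := by nlinarith [norm_nonneg w]
  have hden : (1 - w) * (1 - (starRingEnd ℂ) w) ^ ((α : ℂ) + 1) =
      normSq (1 - w) * (1 - (starRingEnd ℂ) w) ^ (α : ℂ) := by
    rw [cpow_add _ _ hζ, cpow_one, ← mul_conj, map_sub, map_one]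
    ring
  rw [poissonKernelAlpha, hden, Real.rpow_add h1r, Real.rpow_one, cpow_neg]
  have hζα : (1 - (starRingEnd ℂ) w) ^ (α : ℂ) ≠ 0 := cpow_ne_zero_iff.2 (Or.inl hζ)
  push_cast
  field_simp

theorem norm_poissonKernelAlpha_sub_le (hα1 : -1 ≤ α) (hα2 : α ≤ 0) (hw : ‖w‖ < 1) :
    ‖poissonKernelAlpha α w - (((1 - ‖w‖ ^ 2) ^ (α + 1) / (1 + ‖w‖ ^ 2) : ℝ) : ℂ)‖ ≤
      (1 - ‖w‖) ^ α * |(1 - ‖w‖ ^ 2) / normSq (1 - w) - (1 - ‖w‖ ^ 2) / (1 + ‖w‖ ^ 2)| +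
        ((1 - ‖w‖) ^ α - 1) := by
  set r := ‖w‖ with hr
  set ζ := 1 - (starRingEnd ℂ) w
  set A := (1 - r ^ 2) ^ α
  set c := (1 - r ^ 2) / (1 + r ^ 2)
  set Q := (1 - r ^ 2) / normSq (1 - w)
  have hr0 : 0 ≤ r := norm_nonneg w
  have h1r : 0 < 1 - r := by linarith
  have h1r2 : 0 < 1 - r ^ 2 := by nlinarith
  have hA : 0 ≤ A := Real.rpow_nonneg h1r2.le α
  have hAc : A * c ≤ (1 - r) ^ α :=
    calc A * c ≤ A * 1 := mul_le_mul_of_nonneg_left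
          ((div_le_one (by positivity)).2 (by nlinarith)) hA
      _ ≤ (1 - r) ^ α := by
          rw [mul_one]; exact Real.rpow_le_rpow_of_nonpos h1r (by nlinarith) hα2
  have hζ : ‖ζ‖ ≤ 1 + r := by
    simpa [ζ, hr] using norm_sub_le (1 : ℂ) ((starRingEnd ℂ) w)
  have hpow : ‖ζ ^ (-(α : ℂ))‖ ≤ (1 + r) ^ (-α) := by
    rw [← ofReal_neg, norm_cpow_real]
    exact Real.rpow_le_rpow (norm_nonneg _) hζ (by linarith)
  have hpow_sub : ‖ζ ^ (-(α : ℂ)) - 1‖ ≤ 1 - (1 - r) ^ (-α) := by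
    rw [← ofReal_neg, show ζ = 1 + -(starRingEnd ℂ) w by simp [ζ, sub_eq_add_neg]]
    exact norm_one_add_cpow_sub_one_le (by linarith) (by linarith) (by simp [hr]) hw
  have hsplit : poissonKernelAlpha α w - (((1 - r ^ 2) ^ (α + 1) / (1 + r ^ 2) : ℝ) : ℂ) =
      A * ζ ^ (-(α : ℂ)) * ((Q - c : ℝ) : ℂ) + (A * c : ℝ) * (ζ ^ (-(α : ℂ)) - 1) := by
    rw [poissonKernelAlpha_eq_mul hw, ← hr, Real.rpow_add h1r2, Real.rpow_one]
    simp only [A, c, Q, ζ]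
    push_cast
    ring
  have hfactor : (1 - r) ^ α * (1 - (1 - r) ^ (-α)) = (1 - r) ^ α - 1 := by
    rw [mul_sub, mul_one, ← Real.rpow_add h1r, add_neg_cancel, Real.rpow_zero]
  have hAζ : A * (1 + r) ^ (-α) = (1 - r) ^ α := by
    rw [show A = ((1 - r) * (1 + r)) ^ α by simp only [A]; ring_nf,
      Real.mul_rpow h1r.le (by linarith), mul_assoc, ← Real.rpow_add (by linarith), add_neg_cancel, Real.rpow_zero, mul_one]
  rw [hsplit, ← hfactor]
  refine (norm_add_le _ _).trans (add_le_add ?_ ?_)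
  · rw [norm_mul, norm_mul, norm_real, norm_real, Real.norm_of_nonneg hA, Real.norm_eq_abs, ← hAζ]
    gcongr
  · rw [norm_mul, norm_real, Real.norm_of_nonneg (by positivity)]
    gcongr

end PoissonKernelAlpha

theorem Function.Periodic.intervalIntegral_comp_const_sub {E : Type*} [NormedAddCommGroup E]
    [NormedSpace ℝ E] {f : ℝ → E} {T : ℝ} (hf : Function.Periodic f T) (θ : ℝ) :
    ∫ t in (0 : ℝ)..T, f (θ - t) = ∫ t in (0 : ℝ)..T, f t := by
  rw [intervalIntegral.integral_comp_sub_left, sub_zero]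
  have h := hf.intervalIntegral_add_eq (θ - T) 0
  rwa [sub_add_cancel, zero_add] at h

theorem normSq_one_sub_ofReal_mul_exp (r s : ℝ) :
    normSq (1 - r * exp (s * I)) = 1 - 2 * r * Real.cos s + r ^ 2 := by
  rw [normSq_apply]
  simp only [sub_re, one_re, mul_re, ofReal_re, exp_ofReal_mul_I_re, ofReal_im,
    exp_ofReal_mul_I_im, zero_mul, sub_zero, sub_im, one_im, mul_im, add_zero, zero_sub, mul_neg,
    neg_mul, neg_neg]
  nlinarith [Real.sin_sq_add_cos_sq s]

theorem mul_exp_neg_I_mul_eq (z : ℂ) (t : ℝ) :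
    z * exp (-I * t) = ‖z‖ * exp ((arg z - t : ℝ) * I) := by
  conv_lhs => rw [← norm_mul_exp_arg_mul_I z]
  rw [mul_assoc, ← Complex.exp_add]
  push_cast
  ring_nf

theorem norm_mul_exp_neg_I_mul (z : ℂ) (t : ℝ) : ‖z * exp (-I * t)‖ = ‖z‖ := by
  rw [mul_exp_neg_I_mul_eq, norm_mul, norm_exp_ofReal_mul_I, norm_real, norm_norm, mul_one]

theorem continuous_poissonKernelAlpha_mul_exp {α : ℝ} {z : ℂ} (hz : ‖z‖ < 1) :
    Continuous fun t : ℝ => poissonKernelAlpha α (z * exp (-I * t)) :=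
  continuousOn_poissonKernelAlpha.comp_continuous (by fun_prop)
    fun t => by rw [mem_ball_zero_iff, norm_mul_exp_neg_I_mul]; exact hz

theorem integral_norm_poissonKernelAlpha_sub_le {α : ℝ} (hα1 : -1 ≤ α) (hα2 : α ≤ 0) {z : ℂ}
    (hz : ‖z‖ < 1) :
    ∫ t in (0 : ℝ)..2 * π, ‖poissonKernelAlpha α (z * exp (-I * t)) -
        (((1 - ‖z‖ ^ 2) ^ (α + 1) / (1 + ‖z‖ ^ 2) : ℝ) : ℂ)‖ ≤
      8 * (1 - ‖z‖) ^ α * Real.arctan ‖z‖ + 2 * π * ((1 - ‖z‖) ^ α - 1) := by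
  set r := ‖z‖
  have hr : |r| < 1 := by rwa [abs_norm]
  set g := fun t => |diskPoissonKernel r t - (1 - r ^ 2) / (1 + r ^ 2)|
  have hg : Continuous g := ((continuous_diskPoissonKernel hr).sub continuous_const).abs
  have hgper : Function.Periodic g (2 * π) := fun t => by
    simp only [g, diskPoissonKernel_periodic t]
  have hbound : ∀ t : ℝ, ‖poissonKernelAlpha α (z * exp (-I * t)) -
      (((1 - r ^ 2) ^ (α + 1) / (1 + r ^ 2) : ℝ) : ℂ)‖ ≤ (1 - r) ^ α * g (arg z - t) +
        ((1 - r) ^ α - 1) := fun t => by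
    have h := norm_poissonKernelAlpha_sub_le hα1 hα2 (w := z * exp (-I * t))
      (by rwa [norm_mul_exp_neg_I_mul])
    rwa [norm_mul_exp_neg_I_mul, mul_exp_neg_I_mul_eq, normSq_one_sub_ofReal_mul_exp,
      ← mul_exp_neg_I_mul_eq] at h
  have hg' : Continuous fun t => (1 - r) ^ α * g (arg z - t) :=
    continuous_const.mul (hg.comp (continuous_sub_left _))
  refine (intervalIntegral.integral_mono_on (by positivity)
    (((continuous_poissonKernelAlpha_mul_exp hz).sub continuous_const).norm.intervalIntegrable _ _)
    ((hg'.add continuous_const).intervalIntegrable _ _) fun t _ => hbound t).trans_eq ?_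
  simp only [Pi.add_apply]
  rw [intervalIntegral.integral_add (hg'.intervalIntegrable _ _) intervalIntegrable_const,
    intervalIntegral.integral_const_mul, hgper.intervalIntegral_comp_const_sub,
    integral_abs_diskPoissonKernel_sub (norm_nonneg z) hz, intervalIntegral.integral_const,
    sub_zero, smul_eq_mul]
  ring

theorem poissonExt_zero (α : ℝ) (F : ℝ → ℂ) :
    poissonExt α F 0 = (1 / (2 * π) : ℂ) * ∫ t in (0 : ℝ)..2 * π, F t := by
  simp [poissonExt, poissonKernelAlpha_zero]

theorem norm_poissonExt_sub_mul_poissonExt_zero_le {α : ℝ} {F : ℝ → ℂ} (hF : Continuous F)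
    (hF1 : ∀ t, ‖F t‖ ≤ 1) {z : ℂ} (hz : ‖z‖ < 1) (c : ℂ) :
    ‖poissonExt α F z - c * poissonExt α F 0‖ ≤
      1 / (2 * π) * ∫ t in (0 : ℝ)..2 * π, ‖poissonKernelAlpha α (z * exp (-I * t)) - c‖ := by
  have hK : Continuous fun t : ℝ => poissonKernelAlpha α (z * exp (-I * t)) :=
    continuous_poissonKernelAlpha_mul_exp hz
  have hdiff : poissonExt α F z - c * poissonExt α F 0 = (1 / (2 * π) : ℂ) *
      ∫ t in (0 : ℝ)..2 * π, (poissonKernelAlpha α (z * exp (-I * t)) - c) * F t := by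
    rw [poissonExt_zero, poissonExt, mul_left_comm, ← mul_sub,
      ← intervalIntegral.integral_const_mul, ← intervalIntegral.integral_sub
        (f := fun t => poissonKernelAlpha α (z * exp (-I * t)) * F t) (g := fun t => c * F t)
        ((hK.mul hF).intervalIntegrable _ _) ((continuous_const.mul hF).intervalIntegrable _ _)]
    simp only [sub_mul]
  rw [hdiff, norm_mul, show ‖(1 / (2 * π) : ℂ)‖ = 1 / (2 * π) by simp [Real.pi_pos.le]]
  gcongr
  refine intervalIntegral.norm_integral_le_of_norm_le (by positivity) (ae_of_all _ fun t _ => ?_)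
    ((hK.sub continuous_const).norm.intervalIntegrable _ _)
  rw [norm_mul]
  exact mul_le_of_le_one_right (norm_nonneg _) (hF1 t)

theorem schwarz_alpha_neg_general (α : ℝ) (hα1 : -1 < α) (hα2 : α < 0) (fs : ℝ → ℂ)
    (hcont : Continuous fs)
    (hbd : ∀ t : ℝ, ‖(fs t)‖ ≤ 1) :
    ∀ z ∈ Metric.ball (0 : ℂ) 1,
      ‖(poissonExt α fs z -
          ((((1 - ‖z‖ ^ 2) ^ (α + 1) / (1 + ‖z‖ ^ 2) : ℝ)) : ℂ) *
            poissonExt α fs 0)‖ ≤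
        4 / Real.pi * (1 - ‖z‖) ^ α * Real.arctan (‖z‖) +
          ((1 - ‖z‖) ^ α - 1) := by
  intro z hz
  rw [mem_ball_zero_iff] at hz
  calc _ ≤ 1 / (2 * π) * ∫ t in (0 : ℝ)..2 * π, ‖poissonKernelAlpha α (z * exp (-I * t)) -
          (((1 - ‖z‖ ^ 2) ^ (α + 1) / (1 + ‖z‖ ^ 2) : ℝ) : ℂ)‖ :=
        norm_poissonExt_sub_mul_poissonExt_zero_le hcont hbd hz _
    _ ≤ 1 / (2 * π) * (8 * (1 - ‖z‖) ^ α * Real.arctan ‖z‖ + 2 * π * ((1 - ‖z‖) ^ α - 1)) := by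
        gcongr
        exact integral_norm_poissonKernelAlpha_sub_le hα1.le hα2.le hz
    _ = _ := by
        field_simp
        ring

/-- Schwarz-type lemma for `-1 < α < 0`: for `f = P_α[f*]` with `|f*| ≤ 1`,
`|f(z) - ((1-|z|²)^{α+1}/(1+|z|²)) f(0)| ≤ (4/π)(1-|z|)^α arctan|z| + ((1-|z|)^α - 1)`. -/
theorem schwarz_alpha_neg (α : ℝ) (hα1 : -1 < α) (hα2 : α < 0) (fs : ℝ → ℂ)
    (hcont : Continuous fs) (hper : Function.Periodic fs (2 * Real.pi))
    (hbd : ∀ t : ℝ, ‖(fs t)‖ ≤ 1) :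
    ∀ z ∈ Metric.ball (0 : ℂ) 1,
      ‖(poissonExt α fs z -
          ((((1 - ‖z‖ ^ 2) ^ (α + 1) / (1 + ‖z‖ ^ 2) : ℝ)) : ℂ) *
            poissonExt α fs 0)‖ ≤
        4 / Real.pi * (1 - ‖z‖) ^ α * Real.arctan (‖z‖) +
          ((1 - ‖z‖) ^ α - 1) :=
  schwarz_alpha_neg_general α hα1 hα2 fs hcont hbd
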